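/- arXiv:1307.3122 — 2 statements merged into one kernel-verified Lean document; each statement's English description precedes it below -/
import Mathlib

section
/- Let G be an abelian group and π : H → K a surjective group homomorphism, and let Φ : G ≀ H → G ≀ K be the surjective homomorphism given by Φ(f, h) = (π_* f, π(h)), where (π_* f)(k) = Σ_{h' ∈ π⁻¹(k)} f(h'). Then the kernel of Φ equals the normal closure in G ≀ H of the subgroup {(0, n) : n ∈ ker π}. -/
noncomputable section

/-- The bridge from additive automorphisms of `A` to multiplicative automorphisms of
`Multiplicative A`. -/
def bridge {A : Type} [AddCommGroup A] : Multiplicative (AddAut A) →* MulAut (Multiplicative A) where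
  toFun e := AddEquiv.toMultiplicative (Multiplicative.toAdd e)
  map_one' := rfl
  map_mul' _ _ := rfl

/-- The shift action of `H` on `⊕_H G`: `(h · f)(h') = f (h⁻¹ h')`. -/
def shiftHom (G H : Type) [AddCommGroup G] [Group H] :
    H →* MulAut (Multiplicative (H →₀ G)) :=
  bridge.comp (@DistribMulAction.toAddAut H (H →₀ G) _ _ Finsupp.comapDistribMulAction)

/-- The wreath product `G ≀ H = (⊕_H G) ⋊ H`. -/
abbrev Wreath (G H : Type) [AddCommGroup G] [Group H] : Type :=
  Multiplicative (H →₀ G) ⋊[shiftHom G H] H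

/-- The map `Φ : G ≀ H → G ≀ K` induced by `π : H →* K`. -/
def wreathMap {G H K : Type} [AddCommGroup G] [Group H] [Group K] (π : H →* K)
    (w : Wreath G H) : Wreath G K :=
  ⟨Multiplicative.ofAdd (Finsupp.mapDomain π (Multiplicative.toAdd w.left)), π w.right⟩

/-!
The generators `(0, n)`, `n ∈ ker π`, lie in the kernel of the homomorphism `Φ`, hence so does
their normal closure `N`. Conversely, a kernel element `(f, n)` has `π n = 1` and `π_* f = 0`, and
equals `(f, 1) * (0, n)`. The commutator of `(δ_x b, 1)` with `(0, y x⁻¹)` is `(δ_x b - δ_y b, 1)`,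
so `N` contains these differences whenever `π x = π y`. For a section `s` of `π` over its image,
`f - (s ∘ π)_* f` is a sum of such differences, and `(s ∘ π)_* f = s_* (π_* f) = 0`.
-/

open SemidirectProduct Finsupp

namespace SemidirectProduct

variable {N G : Type*} [Group N] [Group G] {φ : G →* MulAut N}

theorem inl_mul_inv_aut_mem {M : Subgroup (N ⋊[φ] G)} [M.Normal] {g : G} (hg : inr g ∈ M)
    (n : N) : inl (n * (φ g n)⁻¹) ∈ M := by
  convert mul_mem (Subgroup.Normal.conj_mem ‹_› _ hg (inl n)) (inv_mem hg) using 1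
  rw [map_mul, ← map_inv, inl_aut, map_inv, map_inv]
  group

end SemidirectProduct

namespace Finsupp

variable {α β M : Type*} [AddCommGroup M]

theorem sub_mapDomain_mem {S : AddSubgroup (α →₀ M)} {g : α → α}
    (hS : ∀ x b, single x b - single (g x) b ∈ S) (f : α →₀ M) : f - mapDomain g f ∈ S := by
  induction f using Finsupp.induction with
  | zero => simp
  | single_add x b f _ _ ih =>
    rw [mapDomain_add, mapDomain_single, add_sub_add_comm]
    exact add_mem (hS x b) ih

theorem mem_of_mapDomain_eq_zero [Nonempty α] {π : α → β} {S : AddSubgroup (α →₀ M)}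
    (hS : ∀ x y b, π x = π y → single x b - single y b ∈ S) {f : α →₀ M}
    (hf : mapDomain π f = 0) : f ∈ S := by
  have hsec : ∀ x, π (Function.invFun π (π x)) = π x := fun x =>
    Function.invFun_eq ⟨x, rfl⟩
  have h := sub_mapDomain_mem (g := Function.invFun π ∘ π) (fun x b => hS x _ b (hsec x).symm) f
  rwa [mapDomain_comp, hf, mapDomain_zero, sub_zero] at h

end Finsupp

section Wreath

variable {G H K : Type} [AddCommGroup G] [Group H] [Group K] (π : H →* K)

theorem shiftHom_ofAdd_single (h x : H) (b : G) :
    shiftHom G H h (Multiplicative.ofAdd (single x b)) = Multiplicative.ofAdd (single (h * x) b) :=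
  congrArg Multiplicative.ofAdd (mapDomain_single (f := (h * ·)))

def wreathMapHom : Wreath G H →* Wreath G K :=
  SemidirectProduct.map (mapDomain.addMonoidHom π).toMultiplicative π fun h => by
    refine MonoidHom.ext fun f => ?_
    show Multiplicative.ofAdd (mapDomain π (mapDomain (h * ·) f.toAdd)) =
      Multiplicative.ofAdd (mapDomain (π h * ·) (mapDomain π f.toAdd))
    rw [← mapDomain_comp, ← mapDomain_comp]
    congr 2
    ext x
    simp

theorem coe_wreathMapHom : ⇑(wreathMapHom (G := G) π) = wreathMap π := rfl

theorem normalClosure_le_ker_wreathMapHom :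
    Subgroup.normalClosure {w : Wreath G H | w.left = 1 ∧ w.right ∈ π.ker} ≤
      (wreathMapHom π).ker := by
  refine Subgroup.normalClosure_le_normal ?_
  rintro w ⟨hleft, hright⟩
  ext
  · simp [wreathMapHom, hleft]
  · exact hright

theorem ker_wreathMapHom_le_normalClosure :
    (wreathMapHom π).ker ≤
      Subgroup.normalClosure {w : Wreath G H | w.left = 1 ∧ w.right ∈ π.ker} := by
  set N := Subgroup.normalClosure {w : Wreath G H | w.left = 1 ∧ w.right ∈ π.ker}
  have hinr : ∀ h ∈ π.ker, (inr h : Wreath G H) ∈ N := fun h hh =>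
    Subgroup.subset_normalClosure ⟨rfl, hh⟩
  have hinl : ∀ f : H →₀ G, mapDomain π f = 0 → inl (Multiplicative.ofAdd f) ∈ N := by
    refine fun f => mem_of_mapDomain_eq_zero (S := (N.comap inl).toAddSubgroup') ?_
    intro x y b hxy
    have hyx : y * x⁻¹ ∈ π.ker := by simp [MonoidHom.mem_ker, hxy]
    have h := inl_mul_inv_aut_mem (hinr _ hyx) (Multiplicative.ofAdd (single x b))
    rwa [shiftHom_ofAdd_single, inv_mul_cancel_right, ← div_eq_mul_inv, ← ofAdd_sub] at h
  intro w hw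
  have hw' := MonoidHom.mem_ker.mp hw
  rw [← inl_left_mul_inr_right w]
  refine mul_mem (hinl (Multiplicative.toAdd w.left) ?_) (hinr _ ?_)
  · simpa [wreathMapHom] using congrArg SemidirectProduct.left hw'
  · simpa [wreathMapHom] using congrArg SemidirectProduct.right hw'

theorem ker_wreathMapHom :
    (wreathMapHom π).ker =
      Subgroup.normalClosure {w : Wreath G H | w.left = 1 ∧ w.right ∈ π.ker} :=
  le_antisymm (ker_wreathMapHom_le_normalClosure π) (normalClosure_le_ker_wreathMapHom π)

end Wreath

theorem wreathMap_ker_eq_normalClosure_general (G H K : Type) [AddCommGroup G] [Group H] [Group K]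
    (π : H →* K) :
    {w : Wreath G H | wreathMap (G := G) π w = 1} =
      ↑(Subgroup.normalClosure {w : Wreath G H | w.left = 1 ∧ w.right ∈ π.ker}) := by
  rw [← ker_wreathMapHom, ← coe_wreathMapHom]
  rfl

theorem wreathMap_ker_eq_normalClosure (G H K : Type) [AddCommGroup G] [Group H] [Group K]
    (π : H →* K) (hπ : Function.Surjective π) :
    {w : Wreath G H | wreathMap (G := G) π w = 1} =
      ↑(Subgroup.normalClosure {w : Wreath G H | w.left = 1 ∧ w.right ∈ π.ker}) :=
  wreathMap_ker_eq_normalClosure_general G H K π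

end
end

section
/- Let G be an abelian group with a nested sequence of finite-index subgroups K₁ ⊇ K₂ ⊇ ⋯ satisfying ⋂_i K_i = {0}, and let H be a group with a nested sequence of finite-index normal subgroups N₁ ⊇ N₂ ⊇ ⋯ satisfying ⋂_i N_i = {1}. For each i let π_i : G ≀ H → (G/K_i) ≀ (H/N_i) be the homomorphism sending (f, h) to (f_i, hN_i), where f_i(h'N_i) = Σ_{h'' ∈ h'N_i} f(h'') + K_i, and let M_i = ker π_i. Then each M_i is a finite-index normal subgroup of G ≀ H, the sequence is nested (M_{i+1} ⊆ M_i for all i), and ⋂_i M_i = {1}. -/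
/-!
Statement 9: Let `G` be an abelian group with a nested sequence of finite-index subgroups
`K₁ ⊇ K₂ ⊇ ⋯` with `⋂ Kᵢ = {0}`, and `H` a group with a nested sequence of finite-index
normal subgroups `N₁ ⊇ N₂ ⊇ ⋯` with `⋂ Nᵢ = {1}`.  For each `i`, let
`πᵢ : G ≀ H → (G/Kᵢ) ≀ (H/Nᵢ)` be the homomorphism `(f, h) ↦ (fᵢ, h Nᵢ)` where
`fᵢ(h'Nᵢ) = ∑_{h'' ∈ h'Nᵢ} f h'' + Kᵢ` (implemented as `mapRange` of the quotient map
composed with `mapDomain` of the quotient map), and let `Mᵢ = ker πᵢ`.  Then each `Mᵢ`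
is a finite-index normal subgroup of `G ≀ H`, the sequence is nested, and `⋂ Mᵢ = {1}`.
-/

noncomputable section

/-- The map `πᵢ : G ≀ H → (G/K) ≀ (H/N)`, `(f, h) ↦ (f', h N)`, where
`f'(h'N) = ∑_{h'' ∈ h'N} f h'' + K`. -/
def piMap {G H : Type} [AddCommGroup G] [Group H] (K : AddSubgroup G) (N : Subgroup H)
    [N.Normal] (w : Wreath G H) : Wreath (G ⧸ K) (H ⧸ N) :=
  ⟨Multiplicative.ofAdd
      (Finsupp.mapRange (⇑(QuotientAddGroup.mk' K)) (map_zero _)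
        (Finsupp.mapDomain (⇑(QuotientGroup.mk' N)) (Multiplicative.toAdd w.left))),
    QuotientGroup.mk w.right⟩

/-!
Each `πᵢ` is an instance of the functor `(φ, ψ) ↦ G ≀ H → G' ≀ H'` (sum over the fibres of `ψ`,
then apply `φ`), so `πᵢ` factors through `πᵢ₊₁` and the kernels are nested; they have finite
index because the targets are finite. If `(f, h)` lies in every kernel then `h ∈ ⋂ Nᵢ = 1`, and
if `f ≠ 0`, pick `x` in its support: for large `i` the projection `H → H ⧸ Nᵢ` is injective on the
finite support of `f` and `f x ∉ Kᵢ`, so the coordinate of `πᵢ (f, 1)` at `x Nᵢ` is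
`f x + Kᵢ ≠ 0`.
-/

namespace Wreath

variable {G H G' H' G'' H'' : Type} [AddCommGroup G] [AddCommGroup G'] [AddCommGroup G'']

def baseMap (φ : G →+ G') (ψ : H → H') : (H →₀ G) →+ (H' →₀ G') :=
  (Finsupp.mapRange.addMonoidHom φ).comp (Finsupp.mapDomain.addMonoidHom ψ)

theorem baseMap_apply (φ : G →+ G') (ψ : H → H') (f : H →₀ G) :
    baseMap φ ψ f = Finsupp.mapRange φ φ.map_zero (Finsupp.mapDomain ψ f) := rfl

theorem baseMap_baseMap (φ₁ : G →+ G') (ψ₁ : H → H') (φ₂ : G' →+ G'') (ψ₂ : H' → H'')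
    (f : H →₀ G) : baseMap φ₂ ψ₂ (baseMap φ₁ ψ₁ f) = baseMap (φ₂.comp φ₁) (ψ₂ ∘ ψ₁) f := by
  induction f using Finsupp.induction_linear with
  | zero => simp only [map_zero]
  | add f g hf hg => simp only [map_add, hf, hg]
  | single h g => simp [baseMap_apply, Finsupp.mapDomain_single, Finsupp.mapRange_single]

variable [Group H] [Group H'] [Group H'']

theorem baseMap_mapDomain_mul_left (φ : G →+ G') (ψ : H →* H') (h : H) (f : H →₀ G) :
    baseMap φ ψ (Finsupp.mapDomain (h * ·) f) = Finsupp.mapDomain (ψ h * ·) (baseMap φ ψ f) := by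
  have hψ : ψ ∘ (h * ·) = (ψ h * ·) ∘ ψ := funext fun y => map_mul ψ h y
  rw [baseMap_apply, baseMap_apply, ← Finsupp.mapDomain_comp, hψ, Finsupp.mapDomain_comp,
    Finsupp.mapDomain_mapRange _ _ _ _ (map_add φ)]

def map (φ : G →+ G') (ψ : H →* H') : Wreath G H →* Wreath G' H' where
  toFun w := ⟨Multiplicative.ofAdd (baseMap φ ψ w.left.toAdd), ψ w.right⟩
  map_one' := SemidirectProduct.ext (by simp) ψ.map_one
  map_mul' a b := by
    refine SemidirectProduct.ext ?_ (ψ.map_mul _ _)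
    change Multiplicative.ofAdd (baseMap φ ψ
      (a.left.toAdd + Finsupp.mapDomain (a.right * ·) b.left.toAdd)) = _
    rw [map_add, baseMap_mapDomain_mul_left]
    rfl

theorem map_comp_map (φ₁ : G →+ G') (ψ₁ : H →* H') (φ₂ : G' →+ G'') (ψ₂ : H' →* H'') :
    (map φ₂ ψ₂).comp (map φ₁ ψ₁) = map (φ₂.comp φ₁) (ψ₂.comp ψ₁) :=
  MonoidHom.ext fun w => SemidirectProduct.ext (congrArg Multiplicative.ofAdd
    (baseMap_baseMap φ₁ ψ₁ φ₂ ψ₂ w.left.toAdd)) rfl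

theorem mem_ker_map_iff (φ : G →+ G') (ψ : H →* H') (w : Wreath G H) :
    w ∈ (map φ ψ).ker ↔ baseMap φ ψ w.left.toAdd = 0 ∧ w.right ∈ ψ.ker := by
  rw [MonoidHom.mem_ker, SemidirectProduct.ext_iff]
  exact Iff.rfl

instance [Finite G] [Finite H] : Finite (Wreath G H) :=
  have : Finite (H →₀ G) := Finite.of_injective _ DFunLike.coe_injective
  Finite.of_equiv _ SemidirectProduct.equivProd.symm

theorem ker_map_mk'_mono {K K' : AddSubgroup G} {N N' : Subgroup H} [N.Normal] [N'.Normal]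
    (hK : K' ≤ K) (hN : N' ≤ N) :
    (map (QuotientAddGroup.mk' K') (QuotientGroup.mk' N')).ker ≤
      (map (QuotientAddGroup.mk' K) (QuotientGroup.mk' N)).ker := by
  have hfac : map (QuotientAddGroup.mk' K) (QuotientGroup.mk' N) =
      (map (QuotientAddGroup.map K' K (.id G) hK) (QuotientGroup.map N' N (.id H) hN)).comp
        (map (QuotientAddGroup.mk' K') (QuotientGroup.mk' N')) := by
    rw [map_comp_map]; rfl
  rw [hfac, ← MonoidHom.comap_ker]
  exact MonoidHom.ker_le_comap _ _

end Wreath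

open Filter

section Separation

variable {ι H : Type} [Preorder ι] [Group H] {N : ι → Subgroup H}

@[to_additive]
theorem Subgroup.eventually_notMem_of_iInf_eq_bot (hN : Antitone N) (hbot : ⨅ i, N i = ⊥)
    {x : H} (hx : x ≠ 1) : ∀ᶠ j in atTop, x ∉ N j := by
  have hx' : x ∉ ⨅ i, N i := by rwa [hbot, Subgroup.mem_bot]
  obtain ⟨i, hi⟩ := not_forall.1 (mt Subgroup.mem_iInf.2 hx')
  filter_upwards [eventually_ge_atTop i] with j hij hj using hi (hN hij hj)

theorem Subgroup.eventually_injOn_mk_of_iInf_eq_bot (hN : Antitone N) (hbot : ⨅ i, N i = ⊥)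
    {S : Set H} (hS : S.Finite) : ∀ᶠ j in atTop, S.InjOn (QuotientGroup.mk : H → H ⧸ N j) := by
  have hpairs : ∀ p ∈ S ×ˢ S, ∀ᶠ j in atTop, p.1 ≠ p.2 → p.1⁻¹ * p.2 ∉ N j := fun p _ => by
    by_cases hp : p.1 = p.2
    · exact Eventually.of_forall fun _ hne => absurd hp hne
    · filter_upwards [eventually_notMem_of_iInf_eq_bot hN hbot (inv_mul_eq_one.not.2 hp)]
        with j hj _ using hj
  filter_upwards [(eventually_all_finite (hS.prod hS)).2 hpairs] with j hj s hs t ht hst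
  by_contra hne
  exact hj (s, t) ⟨hs, ht⟩ hne (QuotientGroup.eq.1 hst)

end Separation

namespace Wreath

variable {ι G H : Type} [Preorder ι] [IsDirectedOrder ι] [Nonempty ι] [AddCommGroup G] [Group H]
  {K : ι → AddSubgroup G} {N : ι → Subgroup H} [∀ i, (N i).Normal]

theorem eq_zero_of_forall_baseMap_mk'_eq_zero (hK : Antitone K) (hKbot : ⨅ i, K i = ⊥)
    (hN : Antitone N) (hNbot : ⨅ i, N i = ⊥) {f : H →₀ G}
    (hf : ∀ i, baseMap (QuotientAddGroup.mk' (K i)) (QuotientGroup.mk' (N i)) f = 0) : f = 0 := by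
  by_contra hf0
  obtain ⟨h, hh⟩ := Finsupp.support_nonempty_iff.2 hf0
  obtain ⟨j, hinj, hnotMem⟩ := ((Subgroup.eventually_injOn_mk_of_iInf_eq_bot hN hNbot
    f.support.finite_toSet).and (AddSubgroup.eventually_notMem_of_iInf_eq_bot hK hKbot
      (Finsupp.mem_support_iff.1 hh))).exists
  -- Injectivity on the support means the coset of `h` meets the support only in `h`.
  have hcoset := Finsupp.mapDomain_apply' _ f subset_rfl hinj hh
  have hval := DFunLike.congr_fun (hf j) (QuotientGroup.mk h)
  rw [baseMap_apply, Finsupp.mapRange_apply] at hval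
  exact hnotMem ((QuotientAddGroup.eq_zero_iff _).1 (hcoset ▸ hval))

theorem iInf_ker_map_mk'_eq_bot (hK : Antitone K) (hKbot : ⨅ i, K i = ⊥)
    (hN : Antitone N) (hNbot : ⨅ i, N i = ⊥) :
    ⨅ i, (map (QuotientAddGroup.mk' (K i)) (QuotientGroup.mk' (N i))).ker = ⊥ := by
  refine (Subgroup.eq_bot_iff_forall _).2 fun w hw => ?_
  simp only [Subgroup.mem_iInf, mem_ker_map_iff, QuotientGroup.ker_mk'] at hw
  have hright : w.right = 1 := by
    simpa [hNbot] using Subgroup.mem_iInf.2 fun i => (hw i).2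
  have hleft : w.left.toAdd = 0 :=
    eq_zero_of_forall_baseMap_mk'_eq_zero hK hKbot hN hNbot fun i => (hw i).1
  exact SemidirectProduct.ext hleft hright

end Wreath

theorem wreath_kernels_nested_finiteIndex_trivial_inter
    (G H : Type) [AddCommGroup G] [Group H]
    (K : ℕ → AddSubgroup G) (N : ℕ → Subgroup H) [inst : ∀ i, (N i).Normal]
    (hKfi : ∀ i, (K i).FiniteIndex) (hNfi : ∀ i, (N i).FiniteIndex)
    (hKnest : ∀ i, K (i + 1) ≤ K i) (hNnest : ∀ i, N (i + 1) ≤ N i)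
    (hKtriv : ⨅ i, K i = ⊥) (hNtriv : ⨅ i, N i = ⊥) :
    ∃ M : ℕ → Subgroup (Wreath G H),
      (∀ i, (M i : Set (Wreath G H)) = {w | piMap (K i) (N i) w = 1}) ∧
      (∀ i, (M i).Normal) ∧ (∀ i, (M i).FiniteIndex) ∧
      (∀ i, M (i + 1) ≤ M i) ∧ (⨅ i, M i = ⊥) := by
  refine ⟨fun i => (Wreath.map (QuotientAddGroup.mk' (K i)) (QuotientGroup.mk' (N i))).ker,
    fun i => Set.ext fun w => MonoidHom.mem_ker, fun i => MonoidHom.normal_ker _, fun i => ?_,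
    fun i => Wreath.ker_map_mk'_mono (hKnest i) (hNnest i),
    Wreath.iInf_ker_map_mk'_eq_bot (antitone_nat_of_succ_le hKnest) hKtriv
      (antitone_nat_of_succ_le hNnest) hNtriv⟩
  have := hKfi i
  have := hNfi i
  exact Subgroup.finiteIndex_ker _

end
end
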